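/- arXiv:2308.06384 — 6 statements merged into one kernel-verified Lean document; each statement's English description precedes it below -/
import Mathlib

section
/- Let E be a complex Hilbert space, P a bounded operator on E with P = P* and P² = P, and u a unitary operator on E (u u* = u* u = 1). Assume that the commutator Pu − uP is a compact operator. Define F := PuP + (1 − P) and G := Pu*P + (1 − P). Then F∘G − 1 and G∘F − 1 are compact operators; in particular F is invertible modulo the compact operators. -/
open ContinuousLinearMap

/-!
Since `P` is idempotent, `P u P` and `1 - P` live on complementary corners, so
`F G - 1 = P u P u* P - P = P (u P - P u) u* P` and likewise
`G F - 1 = P (u* P - P u*) u P`. Both are products with a commutator of `P`, and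
`u* P - P u* = u* (P u - u P) u*`, so both lie in the ideal of compact operators.
-/

section Ring

variable {R : Type*} [Ring R] {p u v : R}

theorem IsIdempotentElem.corner_add_compl_mul_corner_add_compl_sub_one
    (hp : IsIdempotentElem p) (huv : u * v = 1) :
    (p * u * p + (1 - p)) * (p * v * p + (1 - p)) - 1 = p * (u * p - p * u) * v * p := by
  calc (p * u * p + (1 - p)) * (p * v * p + (1 - p)) - 1
      = p * u * (p * p) * v * p + p * u * (p - p * p) + (p - p * p) * v * p + (p * p - p) - p := by
        noncomm_ring
    _ = p * u * p * v * p - p * p * (u * v) * p := by simp only [hp.eq, huv, mul_one]; noncomm_ring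
    _ = p * (u * p - p * u) * v * p := by noncomm_ring

theorem commutator_eq_mul_commutator_mul_of_mul_eq_one (huv : u * v = 1) (hvu : v * u = 1) :
    v * p - p * v = v * (p * u - u * p) * v := by
  calc v * p - p * v = v * p * (u * v) - (v * u) * p * v := by rw [huv, hvu, mul_one, one_mul]
    _ = v * (p * u - u * p) * v := by noncomm_ring

end Ring

theorem IsCompactOperator.mul_mul {𝕜 E : Type*} [NontriviallyNormedField 𝕜]
    [NormedAddCommGroup E] [NormedSpace 𝕜 E] {k : E →L[𝕜] E} (hk : IsCompactOperator k)
    (a b : E →L[𝕜] E) : IsCompactOperator ⇑(a * k * b) :=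
  (hk.comp_clm b).clm_comp a

theorem truncated_unitary_invertible_mod_compacts_general
    {E : Type*} [NormedAddCommGroup E] [InnerProductSpace ℂ E] [CompleteSpace E]
    (P u F G : E →L[ℂ] E)
    (hPidem : P ∘L P = P)
    (hu1 : u ∘L adjoint u = 1) (hu2 : adjoint u ∘L u = 1)
    (hcomm : IsCompactOperator ⇑(P ∘L u - u ∘L P))
    (hF : F = P ∘L u ∘L P + (1 - P))
    (hG : G = P ∘L adjoint u ∘L P + (1 - P)) :
    IsCompactOperator ⇑(F ∘L G - 1) ∧ IsCompactOperator ⇑(G ∘L F - 1) := by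
  have hP : IsIdempotentElem P := hPidem
  have hcomm_swap : IsCompactOperator ⇑(u * P - P * u) := by
    rw [← neg_sub, FunLike.coe_neg]
    exact hcomm.neg
  have hcomm_adj : IsCompactOperator ⇑(adjoint u * P - P * adjoint u) := by
    rw [commutator_eq_mul_commutator_mul_of_mul_eq_one hu1 hu2]
    exact hcomm.mul_mul _ _
  subst hF hG
  constructor
  · change IsCompactOperator ⇑((P * u * P + (1 - P)) * (P * adjoint u * P + (1 - P)) - 1)
    rw [hP.corner_add_compl_mul_corner_add_compl_sub_one hu1, mul_assoc]
    exact hcomm_swap.mul_mul P (adjoint u * P)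
  · change IsCompactOperator ⇑((P * adjoint u * P + (1 - P)) * (P * u * P + (1 - P)) - 1)
    rw [hP.corner_add_compl_mul_corner_add_compl_sub_one hu2, mul_assoc]
    exact hcomm_adj.mul_mul P (u * P)

/-- If `P` is a self-adjoint idempotent bounded operator on a complex Hilbert
space `E`, `u` is a unitary bounded operator, and the commutator `Pu - uP` is compact, then
with `F := PuP + (1 - P)` and `G := Pu*P + (1 - P)`, both `F∘G - 1` and `G∘F - 1` are
compact; in particular `F` is invertible modulo the compact operators. -/
theorem truncated_unitary_invertible_mod_compacts
    {E : Type*} [NormedAddCommGroup E] [InnerProductSpace ℂ E] [CompleteSpace E]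
    (P u F G : E →L[ℂ] E)
    (hPsa : adjoint P = P) (hPidem : P ∘L P = P)
    (hu1 : u ∘L adjoint u = 1) (hu2 : adjoint u ∘L u = 1)
    (hcomm : IsCompactOperator ⇑(P ∘L u - u ∘L P))
    (hF : F = P ∘L u ∘L P + (1 - P))
    (hG : G = P ∘L adjoint u ∘L P + (1 - P)) :
    IsCompactOperator ⇑(F ∘L G - 1) ∧ IsCompactOperator ⇑(G ∘L F - 1) :=
  truncated_unitary_invertible_mod_compacts_general P u F G hPidem hu1 hu2 hcomm hF hG
end

section
/- Let ι be an index set, W ⊆ ι, P := P_W, let H be a bounded self-adjoint operator on ℓ²(ι) such that [P, H] can be written as a composition A∘B of two Hilbert–Schmidt operators, and let f : ℝ → ℂ be a Schwartz function with derivative f'. Then the families i ↦ ⟪e_i, [P, f(H)](e_i)⟫ and i ↦ ⟪e_i, (f'(H)∘[P, H])(e_i)⟫ are both summable, and their sums coincide: Tr([P, f(H)]) = Tr(f'(H)·[P, H]). -/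
/-!
Both traces vanish. The left one does termwise: `P` is diagonal in the standard basis, so every
diagonal entry of a commutator `[P, X]` is zero. For the right one write `[P, H] = A B` with `A`,
`B` Hilbert–Schmidt. Expanding `[P, Hⁿ⁺¹] = ∑ₖ Hᵏ [P, H] Hⁿ⁻ᵏ` and moving the powers of `H`
cyclically through `A B` gives `(n + 1) Tr (Hⁿ A B) = Tr [P, Hⁿ⁺¹] = 0`. Cycling once more,
`|Tr (X A B)| = |Tr (B X A)| ≤ ‖X‖ ∑ᵢ ‖B† eᵢ‖ ‖A eᵢ‖`, so `X ↦ Tr (X A B)` is continuous and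
vanishes on the closure of the polynomials in the self-adjoint `H`, which contains every `g(H)`.
-/

open scoped InnerProductSpace InnerProduct lp
open ContinuousLinearMap

theorem IsSelfAdjoint.apply_eq_zero_of_mem_elemental {R A M : Type*} [CommSemiring R]
    [StarRing R] [TopologicalSpace A] [Semiring A] [StarRing A] [IsSemitopologicalSemiring A]
    [ContinuousStar A] [Algebra R A] [StarModule R A] [TopologicalSpace M] [AddCommMonoid M]
    [Module R M] [T1Space M] {a : A} (ha : IsSelfAdjoint a) {φ : A →L[R] M}
    (hφ : ∀ n : ℕ, φ (a ^ n) = 0) {x : A} (hx : x ∈ StarAlgebra.elemental R a) : φ x = 0 := by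
  have hadjoin : Subalgebra.toSubmodule (StarAlgebra.adjoin R {a}).toSubalgebra ≤
      LinearMap.ker (φ : A →ₗ[R] M) := by
    rw [StarAlgebra.adjoin_eq_span, Set.star_singleton, ha.star_eq, Set.union_self,
      ← Submonoid.powers_eq_closure, Submodule.span_le]
    rintro _ ⟨n, rfl⟩
    exact hφ n
  have hclosure := closure_minimal hadjoin φ.isClosed_ker
  rw [StarAlgebra.elemental, ← SetLike.mem_coe, StarSubalgebra.topologicalClosure_coe] at hx
  exact hclosure hx

theorem ContinuousLinearMap.norm_inner_mul_apply_le {𝕜 E : Type*} [RCLike 𝕜]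
    [NormedAddCommGroup E] [InnerProductSpace 𝕜 E] [CompleteSpace E] (S R : E →L[𝕜] E)
    (v w : E) : ‖⟪v, (S * R) w⟫_𝕜‖ ≤ ‖(S†) v‖ * ‖R w‖ := by
  rw [mul_apply_eq_comp, ← adjoint_inner_left]
  exact norm_inner_le_norm _ _

theorem mul_pow_succ_sub_pow_succ_mul {R : Type*} [Ring R] (p h : R) (n : ℕ) :
    p * h ^ (n + 1) - h ^ (n + 1) * p =
      ∑ k ∈ Finset.range (n + 1), h ^ k * (p * h - h * p) * h ^ (n - k) := by
  rw [Finset.sum_congr rfl fun k hk => ?_,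
    Finset.sum_range_sub' (fun k => h ^ k * p * h ^ (n + 1 - k))]
  · simp
  · rw [Nat.succ_sub (Finset.mem_range_succ_iff.mp hk), Nat.add_sub_add_right, pow_succ h k,
      pow_succ' h (n - k)]
    noncomm_ring

namespace HilbertBasis

variable {ι 𝕜 E : Type*} [RCLike 𝕜] [NormedAddCommGroup E] [InnerProductSpace 𝕜 E]
  (b : HilbertBasis ι 𝕜 E)

theorem hasSum_norm_inner_sq (x : E) : HasSum (fun i => ‖⟪b i, x⟫_𝕜‖ ^ 2) (‖x‖ ^ 2) := by
  simpa [b.repr_apply_apply] using lp.hasSum_norm (p := 2) (by norm_num) (b.repr x)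

def IsHilbertSchmidt (T : E →L[𝕜] E) : Prop := Summable fun i => ‖T (b i)‖ ^ 2

noncomputable def trace (T : E →L[𝕜] E) : 𝕜 := ∑' i, ⟪b i, T (b i)⟫_𝕜

theorem trace_add {S R : E →L[𝕜] E} (hS : Summable fun i => ⟪b i, S (b i)⟫_𝕜)
    (hR : Summable fun i => ⟪b i, R (b i)⟫_𝕜) : b.trace (S + R) = b.trace S + b.trace R := by
  simp only [trace, add_apply, inner_add_right]
  exact hS.tsum_add hR

theorem trace_sum {κ : Type*} (s : Finset κ) (T : κ → E →L[𝕜] E)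
    (hT : ∀ k ∈ s, Summable fun i => ⟪b i, T k (b i)⟫_𝕜) :
    b.trace (∑ k ∈ s, T k) = ∑ k ∈ s, b.trace (T k) := by
  simp only [trace, sum_apply, inner_sum]
  exact Summable.tsum_finsetSum hT

variable {b}

theorem IsHilbertSchmidt.summable_norm_inner_sq {T : E →L[𝕜] E} (hT : b.IsHilbertSchmidt T) :
    Summable fun p : ι × ι => ‖⟪b p.1, T (b p.2)⟫_𝕜‖ ^ 2 := by
  refine ((summable_prod_of_nonneg (f := fun p : ι × ι => ‖⟪b p.2, T (b p.1)⟫_𝕜‖ ^ 2)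
    fun _ => by positivity).2
      ⟨fun j => (b.hasSum_norm_inner_sq (T (b j))).summable, ?_⟩).prod_symm
  simp_rw [(b.hasSum_norm_inner_sq _).tsum_eq]
  exact hT

theorem IsHilbertSchmidt.mul_left {T : E →L[𝕜] E} (hT : b.IsHilbertSchmidt T)
    (S : E →L[𝕜] E) : b.IsHilbertSchmidt (S * T) :=
  (Summable.mul_left (‖S‖ ^ 2) hT).of_nonneg_of_le (fun _ => by positivity) fun i => by
    rw [← mul_pow]
    exact pow_le_pow_left₀ (norm_nonneg _) (S.le_opNorm _) 2

theorem IsHilbertSchmidt.summable_norm_mul_norm {S R : E →L[𝕜] E} (hS : b.IsHilbertSchmidt S)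
    (hR : b.IsHilbertSchmidt R) : Summable fun i => ‖S (b i)‖ * ‖R (b i)‖ :=
  ((Summable.add hS hR).div_const 2).of_nonneg_of_le (fun _ => by positivity) fun i => by
    linarith [two_mul_le_add_sq ‖S (b i)‖ ‖R (b i)‖]

variable [CompleteSpace E]

theorem IsHilbertSchmidt.adjoint {T : E →L[𝕜] E} (hT : b.IsHilbertSchmidt T) :
    b.IsHilbertSchmidt (T†) := by
  refine ((summable_prod_of_nonneg fun _ => by positivity).1 hT.summable_norm_inner_sq).2.congr
    fun i => ?_
  rw [← (b.hasSum_norm_inner_sq _).tsum_eq]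
  refine tsum_congr fun j => ?_
  rw [adjoint_inner_right, norm_inner_symm]

theorem IsHilbertSchmidt.mul_right {T : E →L[𝕜] E} (hT : b.IsHilbertSchmidt T)
    (S : E →L[𝕜] E) : b.IsHilbertSchmidt (T * S) := by
  simpa [mul_def, adjoint_comp] using (hT.adjoint.mul_left (S†)).adjoint

theorem IsHilbertSchmidt.summable_inner_mul_apply {S R : E →L[𝕜] E}
    (hS : b.IsHilbertSchmidt S) (hR : b.IsHilbertSchmidt R) :
    Summable fun i => ⟪b i, (S * R) (b i)⟫_𝕜 :=
  (hS.adjoint.summable_norm_mul_norm hR).of_norm_bounded fun i =>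
    norm_inner_mul_apply_le S R (b i) (b i)

theorem inner_mul_apply_eq_tsum (S R : E →L[𝕜] E) (i : ι) :
    ⟪b i, (S * R) (b i)⟫_𝕜 = ∑' j, ⟪b i, S (b j)⟫_𝕜 * ⟪b j, R (b i)⟫_𝕜 := by
  rw [mul_apply_eq_comp, ← adjoint_inner_left, ← b.tsum_inner_mul_inner]
  simp_rw [adjoint_inner_left]

theorem IsHilbertSchmidt.trace_mul_comm {S R : E →L[𝕜] E} (hS : b.IsHilbertSchmidt S)
    (hR : b.IsHilbertSchmidt R) : b.trace (S * R) = b.trace (R * S) := by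
  set f : ι × ι → 𝕜 := fun p => ⟪b p.1, S (b p.2)⟫_𝕜 * ⟪b p.2, R (b p.1)⟫_𝕜
  have hf : Summable f := ((hS.summable_norm_inner_sq.add
      hR.summable_norm_inner_sq.prod_symm).div_const 2).of_norm_bounded fun p => by
    simp only [f, Prod.fst_swap, Prod.snd_swap, norm_mul]
    linarith [two_mul_le_add_sq ‖⟪b p.1, S (b p.2)⟫_𝕜‖ ‖⟪b p.2, R (b p.1)⟫_𝕜‖]
  calc b.trace (S * R) = ∑' i, ∑' j, f (i, j) := tsum_congr (inner_mul_apply_eq_tsum S R)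
    _ = ∑' j, ∑' i, f (i, j) := (Summable.tsum_comm (f := fun i j => f (i, j)) hf).symm
    _ = b.trace (R * S) := tsum_congr fun j => by
      rw [inner_mul_apply_eq_tsum]
      exact tsum_congr fun i => mul_comm _ _

theorem IsHilbertSchmidt.norm_trace_mul_mul_le {A B : E →L[𝕜] E} (hA : b.IsHilbertSchmidt A)
    (hB : b.IsHilbertSchmidt B) (D : E →L[𝕜] E) :
    ‖b.trace (D * (A * B))‖ ≤ (∑' i, ‖(B†) (b i)‖ * ‖A (b i)‖) * ‖D‖ := by
  rw [← mul_assoc, (hA.mul_left D).trace_mul_comm hB]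
  refine tsum_of_norm_bounded ((hB.adjoint.summable_norm_mul_norm hA).hasSum.mul_right ‖D‖)
    fun i => (norm_inner_mul_apply_le B (D * A) (b i) (b i)).trans ?_
  rw [mul_assoc, mul_comm ‖A (b i)‖]
  gcongr
  exact D.le_opNorm _

noncomputable def traceMulCLM {A B : E →L[𝕜] E} (hA : b.IsHilbertSchmidt A)
    (hB : b.IsHilbertSchmidt B) : (E →L[𝕜] E) →L[𝕜] 𝕜 :=
  LinearMap.mkContinuous
    { toFun := fun D => b.trace (D * (A * B))
      map_add' := fun D₁ D₂ => by
        simp only [add_mul, ← mul_assoc]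
        exact b.trace_add ((hA.mul_left D₁).summable_inner_mul_apply hB)
          ((hA.mul_left D₂).summable_inner_mul_apply hB)
      map_smul' := fun c D => by
        simp [trace, inner_smul_right, tsum_mul_left] }
    _ (hA.norm_trace_mul_mul_le hB)

theorem trace_pow_mul_eq_zero {P H A B : E →L[𝕜] E}
    (hP : ∀ T : E →L[𝕜] E, b.trace (P * T - T * P) = 0) (hA : b.IsHilbertSchmidt A)
    (hB : b.IsHilbertSchmidt B) (hAB : P * H - H * P = A * B) (n : ℕ) :
    b.trace (H ^ n * (A * B)) = 0 := by
  have hterm : ∀ k ∈ Finset.range (n + 1),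
      b.trace (H ^ k * (A * B) * H ^ (n - k)) = b.trace (H ^ n * (A * B)) := fun k hk => by
    have hkn : n - k + k = n := Nat.sub_add_cancel (Finset.mem_range_succ_iff.mp hk)
    calc b.trace (H ^ k * (A * B) * H ^ (n - k))
          = b.trace (H ^ k * A * (B * H ^ (n - k))) := by simp only [mul_assoc]
      _ = b.trace (B * H ^ (n - k) * (H ^ k * A)) :=
          (hA.mul_left _).trace_mul_comm (hB.mul_right _)
      _ = b.trace (B * (H ^ n * A)) := by
          rw [mul_assoc, ← mul_assoc (H ^ (n - k)), ← pow_add, hkn]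
      _ = b.trace (H ^ n * (A * B)) := by
          rw [hB.trace_mul_comm (hA.mul_left _), mul_assoc]
  have hsummable : ∀ k ∈ Finset.range (n + 1),
      Summable fun i => ⟪b i, (H ^ k * (A * B) * H ^ (n - k)) (b i)⟫_𝕜 := fun k _ => by
    simpa only [mul_assoc] using
      (hA.mul_left (H ^ k)).summable_inner_mul_apply (hB.mul_right (H ^ (n - k)))
  have h := hP (H ^ (n + 1))
  rw [mul_pow_succ_sub_pow_succ_mul, hAB, b.trace_sum _ _ hsummable,
    Finset.sum_congr rfl hterm, Finset.sum_const, Finset.card_range, nsmul_eq_mul] at h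
  exact (mul_eq_zero.mp h).resolve_left (Nat.cast_ne_zero.mpr n.succ_ne_zero)

theorem trace_mul_eq_zero_of_mem_elemental {P H A B : E →L[𝕜] E} (hH : IsSelfAdjoint H)
    (hP : ∀ T : E →L[𝕜] E, b.trace (P * T - T * P) = 0) (hA : b.IsHilbertSchmidt A)
    (hB : b.IsHilbertSchmidt B) (hAB : P * H - H * P = A * B) {X : E →L[𝕜] E}
    (hX : X ∈ StarAlgebra.elemental 𝕜 H) : b.trace (X * (A * B)) = 0 :=
  hH.apply_eq_zero_of_mem_elemental (φ := b.traceMulCLM hA hB)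
    (trace_pow_mul_eq_zero hP hA hB hAB) hX

end HilbertBasis

theorem HilbertBasis.default_apply {ι 𝕜 : Type*} [RCLike 𝕜] [DecidableEq ι] (i : ι) :
    (default : HilbertBasis ι 𝕜 ℓ²(ι, 𝕜)) i = lp.single 2 i 1 :=
  (HilbertBasis.repr_symm_single _ i).symm

theorem lp.inner_single_commutator_apply_single_eq_zero {ι 𝕜 : Type*} [RCLike 𝕜]
    [DecidableEq ι] {W : Set ι} {P : ℓ²(ι, 𝕜) →L[𝕜] ℓ²(ι, 𝕜)}
    (hP : ∀ (x : ℓ²(ι, 𝕜)) (i : ι), P x i = W.indicator x i) (T : ℓ²(ι, 𝕜) →L[𝕜] ℓ²(ι, 𝕜)) (i : ι) :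
    ⟪lp.single 2 i (1 : 𝕜), (P * T - T * P) (lp.single 2 i 1)⟫_𝕜 = 0 := by
  have hPe : P (lp.single 2 i 1) =
      (W.indicator (1 : ι → 𝕜) i • lp.single 2 i 1 : ℓ²(ι, 𝕜)) := by
    ext j
    rw [hP]
    by_cases hj : j = i
    · subst hj
      by_cases hW : j ∈ W <;> simp [hW]
    · simp [hj]
  rw [sub_apply, inner_sub_right, mul_apply_eq_comp, mul_apply_eq_comp, hPe, map_smul,
    inner_smul_right, lp.inner_single_left, lp.inner_single_left, hP]
  by_cases hW : i ∈ W <;> simp [hW]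

/-- Let `W ⊆ ι`, `P := P_W`, `H` a bounded self-adjoint operator on `ℓ²(ι)`
such that `[P, H]` factors as a composition of two Hilbert–Schmidt operators, and `f` a
Schwartz function on `ℝ` with values in `ℂ`, with derivative `f'`. Then the diagonal matrix
entries of `[P, f(H)]` and of `f'(H)∘[P, H]` are both summable, with the same sum:
`Tr([P, f(H)]) = Tr(f'(H)·[P, H])`. Here `g(H)` is the continuous functional calculus of
the self-adjoint operator `H` (applied through the real part of the spectral variable,
as the spectrum of `H` is real). -/
theorem trace_commutator_functional_calculus
    {ι : Type*} [DecidableEq ι] (W : Set ι)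
    (H P A B : lp (fun _ : ι => ℂ) 2 →L[ℂ] lp (fun _ : ι => ℂ) 2)
    (hH : IsSelfAdjoint H)
    (hP : ∀ (x : lp (fun _ : ι => ℂ) 2) (i : ι), (P x) i = W.indicator (⇑x) i)
    (hA : Summable fun j : ι => ‖A (lp.single 2 j (1 : ℂ))‖ ^ 2)
    (hB : Summable fun j : ι => ‖B (lp.single 2 j (1 : ℂ))‖ ^ 2)
    (hAB : P ∘L H - H ∘L P = A ∘L B)
    (f : SchwartzMap ℝ ℂ) :
    Summable
      (fun i : ι =>
        ⟪lp.single 2 i (1 : ℂ),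
          (P ∘L cfc (fun z : ℂ => f z.re) H - cfc (fun z : ℂ => f z.re) H ∘L P)
            (lp.single 2 i (1 : ℂ))⟫_ℂ) ∧
    Summable
      (fun i : ι =>
        ⟪lp.single 2 i (1 : ℂ),
          (cfc (fun z : ℂ => deriv (⇑f) z.re) H ∘L (P ∘L H - H ∘L P))
            (lp.single 2 i (1 : ℂ))⟫_ℂ) ∧
    (∑' i : ι,
        ⟪lp.single 2 i (1 : ℂ),
          (P ∘L cfc (fun z : ℂ => f z.re) H - cfc (fun z : ℂ => f z.re) H ∘L P)
            (lp.single 2 i (1 : ℂ))⟫_ℂ)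
      = ∑' i : ι,
          ⟪lp.single 2 i (1 : ℂ),
            (cfc (fun z : ℂ => deriv (⇑f) z.re) H ∘L (P ∘L H - H ∘L P))
              (lp.single 2 i (1 : ℂ))⟫_ℂ := by
  set b : HilbertBasis ι ℂ ℓ²(ι, ℂ) := default
  have he : ∀ i, lp.single 2 i (1 : ℂ) = b i := fun i => (HilbertBasis.default_apply i).symm
  have hdiag : ∀ T i, ⟪b i, (P * T - T * P) (b i)⟫_ℂ = 0 := fun T i => by
    rw [← he]
    exact lp.inner_single_commutator_apply_single_eq_zero hP T i
  have hA' : b.IsHilbertSchmidt A := by simpa only [he, HilbertBasis.IsHilbertSchmidt] using hA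
  have hB' : b.IsHilbertSchmidt B := by simpa only [he, HilbertBasis.IsHilbertSchmidt] using hB
  have hAB' : P * H - H * P = A * B := hAB
  have htrace := b.trace_mul_eq_zero_of_mem_elemental hH
    (fun T => by simp only [HilbertBasis.trace, hdiag, tsum_zero]) hA' hB' hAB'
    (cfc_mem_elemental (fun z : ℂ => deriv (⇑f) z.re) H)
  simp only [he, ← mul_def, hAB', hdiag, tsum_zero, summable_zero, true_and]
  exact ⟨(hA'.mul_left _).summable_inner_mul_apply hB', htrace.symm⟩
end

section
/- Let A be a unital complex C*-algebra, a ∈ A self-adjoint, b ∈ A, and f : ℝ → ℂ a Schwartz function with derivative f'. Then [b, f(a)] = ∫_ℝ ∫₀¹ 𝓕(f')(ξ) · exp(2πiξ(1−t)·a) · (b·a − a·b) · exp(2πiξt·a) dt dξ, where the integrals are Bochner integrals in A and f(a) denotes the continuous functional calculus of a applied to f. -/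
/-!
Fourier inversion writes `f(a)` as `∫ 𝓕f(ξ) exp(2πiξa) dξ`, so `[b, f(a)]` is the integral of
`𝓕f(ξ) [b, exp(2πiξa)]`. Duhamel's formula expresses `[b, exp x]` as
`∫₀¹ exp((1-t)x) [b, x] exp(tx) dt`, and for `x = 2πiξa` the factor `2πiξ` coming out of `[b, x]`
combines with `𝓕f(ξ)` into `𝓕(f')(ξ)`.
-/

open FourierTransform MeasureTheory
open scoped Real
open Complex NormedSpace

theorem Real.integral_fourier_mul_exp_eq {f : ℝ → ℂ} (hc : Continuous f) (hf : Integrable f)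
    (hFf : Integrable (𝓕 f)) (x : ℝ) :
    ∫ ξ : ℝ, 𝓕 f ξ * Complex.exp (((2 * π * ξ : ℝ) : ℂ) * I * x) = f x := by
  conv_rhs => rw [← hc.fourierInv_fourier_eq hf hFf, fourierInv_eq']
  refine integral_congr_ae (.of_forall fun ξ => ?_)
  simp only [smul_eq_mul, RCLike.inner_apply, conj_trivial]
  push_cast
  ring_nf

theorem SchwartzMap.fourier_deriv {E : Type*} [NormedAddCommGroup E] [NormedSpace ℂ E]
    (f : SchwartzMap ℝ E) : 𝓕 (deriv f) = fun ξ : ℝ => (2 * π * I * ξ) • 𝓕 ⇑f ξ := by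
  refine Real.fourier_deriv f.integrable f.differentiable ?_
  rw [← funext (SchwartzMap.derivCLM_apply ℂ f)]
  exact (SchwartzMap.derivCLM ℂ E f).integrable

theorem mul_integral_sub_integral_mul {X A : Type*} [MeasurableSpace X] {μ : Measure X}
    [NormedRing A] [NormedSpace ℝ A] [IsScalarTower ℝ A A] [SMulCommClass ℝ A A]
    {g : X → A} (hg : Integrable g μ) (b : A) :
    b * ∫ x, g x ∂μ - (∫ x, g x ∂μ) * b = ∫ x, (b * g x - g x * b) ∂μ := by
  rw [integral_sub (hg.const_mul b) (hg.mul_const b), integral_const_mul_of_integrable hg,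
    integral_mul_const_of_integrable hg]

/-- Duhamel's formula: differentiate `t ↦ exp ((1 - t) • x) * b * exp (t • x)`. -/
theorem commutator_exp_eq_integral {A : Type*} [NormedRing A] [NormedAlgebra ℝ A]
    [CompleteSpace A] (x b : A) :
    b * exp x - exp x * b
      = ∫ t in (0:ℝ)..1, exp ((1 - t) • x) * (b * x - x * b) * exp (t • x) := by
  have hexp : Continuous fun s : ℝ => exp (s • x) :=
    continuous_iff_continuousAt.2 fun s => (hasDerivAt_exp_smul_const x s).continuousAt
  have hderiv (t : ℝ) : HasDerivAt (fun t : ℝ => exp ((1 - t) • x) * b * exp (t • x))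
      (exp ((1 - t) • x) * (b * x - x * b) * exp (t • x)) t := by
    have hleft : HasDerivAt (fun t : ℝ => exp ((1 - t) • x))
        ((-1 : ℝ) • (exp ((1 - t) • x) * x)) t :=
      (hasDerivAt_exp_smul_const x (1 - t)).scomp t ((hasDerivAt_id t).const_sub 1)
    convert (hleft.mul_const b).mul (hasDerivAt_exp_smul_const' x t) using 1
    · rfl
    rw [neg_one_smul]
    noncomm_ring
  have hcont : Continuous fun t : ℝ => exp ((1 - t) • x) * (b * x - x * b) * exp (t • x) :=
    ((hexp.comp (continuous_const.sub continuous_id)).mul continuous_const).mul hexp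
  rw [intervalIntegral.integral_eq_sub_of_hasDerivAt (fun t _ => hderiv t)
    (hcont.intervalIntegrable 0 1)]
  simp

theorem commutator_exp_ofReal_mul_I_smul_eq_integral {A : Type*} [NormedRing A]
    [NormedAlgebra ℂ A] [CompleteSpace A] (a b : A) (c : ℝ) :
    b * exp (((c : ℂ) * I) • a) - exp (((c : ℂ) * I) • a) * b
      = ((c : ℂ) * I) • ∫ t in (0:ℝ)..1, exp (((c * (1 - t) : ℝ) * I) • a) * (b * a - a * b)
          * exp (((c * t : ℝ) * I) • a) := by
  have hscale (s : ℝ) : s • ((c : ℂ) * I) • a = ((c * s : ℝ) * I) • a := by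
    rw [← Complex.coe_smul, smul_smul]
    push_cast
    ring_nf
  have hbracket : b * (((c : ℂ) * I) • a) - ((c : ℂ) * I) • a * b
      = ((c : ℂ) * I) • (b * a - a * b) := by
    rw [mul_smul_comm, smul_mul_assoc, smul_sub]
  rw [commutator_exp_eq_integral, ← intervalIntegral.integral_smul]
  refine intervalIntegral.integral_congr fun t _ => ?_
  rw [hbracket, hscale, hscale, mul_smul_comm, smul_mul_assoc]

section SelfAdjoint

variable {A : Type*} [CStarAlgebra A] {a : A}

theorem IsSelfAdjoint.exp_ofReal_mul_I_smul_mem_unitary (ha : IsSelfAdjoint a) (r : ℝ) :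
    NormedSpace.exp (((r : ℂ) * I) • a) ∈ unitary A := by
  let +nondep : NormedAlgebra ℚ A := .restrictScalars ℚ ℂ A
  refine exp_mem_unitary_of_mem_skewAdjoint (ha.smul_mem_skewAdjoint ?_)
  simp [skewAdjoint.mem_iff]

theorem IsSelfAdjoint.norm_exp_ofReal_mul_I_smul_le_one (ha : IsSelfAdjoint a) (r : ℝ) :
    ‖NormedSpace.exp (((r : ℂ) * I) • a)‖ ≤ 1 := by
  nontriviality A
  exact (CStarRing.norm_of_mem_unitary (ha.exp_ofReal_mul_I_smul_mem_unitary r)).le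

theorem IsSelfAdjoint.integrable_smul_exp_ofReal_mul_I_smul (ha : IsSelfAdjoint a)
    {g : ℝ → ℂ} (hg : Integrable g) (c : ℝ) :
    Integrable fun ξ : ℝ => g ξ • NormedSpace.exp (((c * ξ : ℝ) * I) • a) := by
  let +nondep : NormedAlgebra ℚ A := .restrictScalars ℚ ℂ A
  refine hg.smul_bdd 1 (Continuous.aestronglyMeasurable ?_)
    (.of_forall fun ξ => ha.norm_exp_ofReal_mul_I_smul_le_one _)
  exact exp_continuous.comp (by fun_prop)

theorem IsSelfAdjoint.cfc_eq_integral_fourier_smul_exp (ha : IsSelfAdjoint a) {f : ℝ → ℂ}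
    (hc : Continuous f) (hf : Integrable f) (hFf : Integrable (𝓕 f)) :
    cfc (fun z : ℂ => f z.re) a
      = ∫ ξ : ℝ, 𝓕 f ξ • NormedSpace.exp (((2 * π * ξ : ℝ) * I) • a) := by
  have hspec : ∀ z ∈ spectrum ℂ a,
      f z.re = ∫ ξ : ℝ, 𝓕 f ξ * Complex.exp (((2 * π * ξ : ℝ) * I) * z) := by
    intro z hz
    rw [← Real.integral_fourier_mul_exp_eq hc hf hFf z.re, ← ha.mem_spectrum_eq_re hz]
  have hbound : ∀ᵐ ξ : ℝ, ∀ z ∈ spectrum ℂ a,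
      ‖𝓕 f ξ * Complex.exp (((2 * π * ξ : ℝ) * I) * z)‖ ≤ ‖𝓕 f ξ‖ := by
    refine .of_forall fun ξ z hz => ?_
    have hphase : ((2 * π * ξ : ℝ) * I) * (z.re : ℂ) = ((2 * π * ξ * z.re : ℝ) : ℂ) * I := by
      push_cast
      ring
    rw [ha.mem_spectrum_eq_re hz, norm_mul, hphase, norm_exp_ofReal_mul_I, mul_one]
  have hFc : Continuous (𝓕 f) :=
    VectorFourier.fourierIntegral_continuous Real.continuous_fourierChar (by fun_prop) hf
  rw [cfc_congr hspec, cfc_integral _ _ a (by fun_prop) hbound hFf.norm.hasFiniteIntegral]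
  -- makes each `c • a` normal by instance, as `CFC.complex_exp_eq_normedSpace_exp` needs
  have := ha.isStarNormal
  refine integral_congr_ae (.of_forall fun ξ => ?_)
  dsimp only
  rw [cfc_const_mul _ _ a, cfc_comp_const_mul _ Complex.exp a, CFC.complex_exp_eq_normedSpace_exp]

end SelfAdjoint

/-- In a unital complex C*-algebra `A`, for `a ∈ A` self-adjoint, `b ∈ A` and
a Schwartz function `f : ℝ → ℂ` with derivative `f'`, one has
`[b, f(a)] = ∫_ℝ ∫₀¹ 𝓕(f')(ξ) • exp(2πiξ(1-t)a) (ba - ab) exp(2πiξt a) dt dξ`,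
where `f(a)` is the continuous functional calculus of `a` applied to `f` (through the real
part of the spectral variable, since the spectrum of `a` is real). -/
theorem commutator_cfc_integral_formula
    {A : Type*} [CStarAlgebra A]
    (a b : A) (ha : IsSelfAdjoint a) (f : SchwartzMap ℝ ℂ) :
    b * cfc (fun z : ℂ => f z.re) a - cfc (fun z : ℂ => f z.re) a * b
      = ∫ ξ : ℝ, ∫ t in (0:ℝ)..1,
          𝓕 (deriv (⇑f)) ξ •
            (NormedSpace.exp (((2 * π * ξ * (1 - t) : ℝ) * Complex.I) • a)
              * (b * a - a * b)
              * NormedSpace.exp (((2 * π * ξ * t : ℝ) * Complex.I) • a)) := by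
  have hFf : Integrable (𝓕 ⇑f) := SchwartzMap.fourier_coe f ▸ (𝓕 f).integrable
  rw [ha.cfc_eq_integral_fourier_smul_exp f.continuous f.integrable hFf,
    mul_integral_sub_integral_mul (ha.integrable_smul_exp_ofReal_mul_I_smul hFf (2 * π)) b]
  refine integral_congr_ae (.of_forall fun ξ => ?_)
  dsimp only
  rw [mul_smul_comm, smul_mul_assoc, ← smul_sub, commutator_exp_ofReal_mul_I_smul_eq_integral,
    smul_smul, ← intervalIntegral.integral_smul, SchwartzMap.fourier_deriv]
  congr 2 with t
  push_cast
  ring_nf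
end

section
/- Let A be a unital complex C*-algebra, a ∈ A self-adjoint, and f : ℝ → ℂ a Schwartz function. Then the map ξ ↦ 𝓕f(ξ) · exp(2πiξ·a) is Bochner integrable on ℝ and f(a) = ∫_ℝ 𝓕f(ξ) · exp(2πiξ·a) dξ, where f(a) denotes the continuous functional calculus of a applied to f. -/
open FourierTransform MeasureTheory
open scoped Real

/-!
Each `exp (2πiξ a)` is the continuous functional calculus of `z ↦ exp (2πiξ z)`, which has
modulus one on the real spectrum of `a`. Hence the integrand is dominated by `|𝓕 f|`, the
integral commutes with the functional calculus, and it becomes the functional calculus of the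
scalar inverse Fourier transform `𝓕⁻ (𝓕 f) = f`.
-/

lemma Complex.norm_exp_ofReal_mul_I_mul_of_im_eq_zero (t : ℝ) {z : ℂ} (hz : z.im = 0) :
    ‖Complex.exp (t * Complex.I * z)‖ = 1 := by
  rw [← Complex.re_add_im z, hz, Complex.ofReal_zero, zero_mul, add_zero, mul_right_comm,
    ← Complex.ofReal_mul, Complex.norm_exp_ofReal_mul_I]

lemma NormedSpace.exp_smul_eq_cfc {A : Type*} [CStarAlgebra A] (c : ℂ) (a : A) [IsStarNormal a] :
    NormedSpace.exp (c • a) = cfc (fun z : ℂ => Complex.exp (c * z)) a := by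
  rw [cfc_comp_const_mul c Complex.exp a, CFC.complex_exp_eq_normedSpace_exp]

namespace IsSelfAdjoint

variable {A : Type*} [CStarAlgebra A] {a : A}

lemma norm_exp_ofReal_mul_I_smul_le_one_s9 (ha : IsSelfAdjoint a) (t : ℝ) :
    ‖NormedSpace.exp ((t * Complex.I) • a)‖ ≤ 1 := by
  have := ha.isStarNormal
  rw [NormedSpace.exp_smul_eq_cfc]
  exact norm_cfc_le zero_le_one fun z hz =>
    (Complex.norm_exp_ofReal_mul_I_mul_of_im_eq_zero t (ha.im_eq_zero_of_mem_spectrum hz)).le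

lemma integrable_smul_exp_smul (ha : IsSelfAdjoint a) {μ : Measure ℝ} {g : ℝ → ℂ}
    (hg : Integrable g μ) :
    Integrable (fun ξ : ℝ => g ξ • NormedSpace.exp (((2 * π * ξ : ℝ) * Complex.I) • a)) μ := by
  -- the continuity of `NormedSpace.exp` is stated for normed `ℚ`-algebras
  let : NormedAlgebra ℚ A := .restrictScalars ℚ ℂ A
  refine hg.smul_bdd 1 (by fun_prop) (.of_forall fun ξ => ?_)
  exact ha.norm_exp_ofReal_mul_I_smul_le_one_s9 _

lemma integral_smul_exp_smul_eq_cfc_fourierInv (ha : IsSelfAdjoint a) {g : ℝ → ℂ}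
    (hg : Integrable g) (hg_cont : Continuous g) :
    ∫ ξ : ℝ, g ξ • NormedSpace.exp (((2 * π * ξ : ℝ) * Complex.I) • a)
      = cfc (fun z : ℂ => 𝓕⁻ g z.re) a := by
  have := ha.isStarNormal
  set kernel : ℝ → ℂ → ℂ := fun ξ z => g ξ * Complex.exp ((2 * π * ξ : ℝ) * Complex.I * z)
  have h_term (ξ : ℝ) : g ξ • NormedSpace.exp (((2 * π * ξ : ℝ) * Complex.I) • a)
      = cfc (kernel ξ) a := by
    rw [NormedSpace.exp_smul_eq_cfc]
    exact (cfc_const_mul _ _ a).symm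
  have h_bound : ∀ᵐ ξ : ℝ, ∀ z ∈ spectrum ℂ a, ‖kernel ξ z‖ ≤ ‖g ξ‖ := .of_forall fun ξ z hz => by
    rw [norm_mul, Complex.norm_exp_ofReal_mul_I_mul_of_im_eq_zero _
      (ha.im_eq_zero_of_mem_spectrum hz), mul_one]
  simp_rw [h_term]
  rw [← cfc_integral kernel (‖g ·‖) a (by fun_prop) h_bound hg.norm.hasFiniteIntegral]
  refine cfc_congr fun z hz => ?_
  rw [Real.fourierInv_eq']
  refine integral_congr_ae (.of_forall fun ξ => ?_)
  rw [← Complex.re_add_im z, ha.im_eq_zero_of_mem_spectrum hz]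
  simp only [kernel, Complex.ofReal_zero, zero_mul, add_zero, Complex.ofReal_re,
    RCLike.inner_apply, conj_trivial, smul_eq_mul]
  rw [mul_comm]
  congr 2
  push_cast
  ring

end IsSelfAdjoint

/-- In a unital complex C*-algebra `A`, for `a ∈ A` self-adjoint and a Schwartz
function `f : ℝ → ℂ`, the map `ξ ↦ 𝓕f(ξ) • exp(2πiξ a)` is Bochner integrable on `ℝ` and
`f(a) = ∫_ℝ 𝓕f(ξ) • exp(2πiξ a) dξ`, where `f(a)` is the continuous functional calculus of
`a` applied to `f` (through the real part of the spectral variable, since the spectrum of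
`a` is real). -/
theorem cfc_fourier_inversion_formula
    {A : Type*} [CStarAlgebra A] (a : A) (ha : IsSelfAdjoint a) (f : SchwartzMap ℝ ℂ) :
    Integrable
      (fun ξ : ℝ => 𝓕 (⇑f) ξ • NormedSpace.exp (((2 * π * ξ : ℝ) * Complex.I) • a)) ∧
    cfc (fun z : ℂ => f z.re) a
      = ∫ ξ : ℝ, 𝓕 (⇑f) ξ • NormedSpace.exp (((2 * π * ξ : ℝ) * Complex.I) • a) := by
  have hFf_int : Integrable (𝓕 ⇑f) := SchwartzMap.fourier_coe f ▸ (𝓕 f).integrable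
  have hFf_cont : Continuous (𝓕 ⇑f) := SchwartzMap.fourier_coe f ▸ (𝓕 f).continuous
  refine ⟨ha.integrable_smul_exp_smul hFf_int, ?_⟩
  rw [ha.integral_smul_exp_smul_eq_cfc_fourierInv hFf_int hFf_cont,
    f.continuous.fourierInv_fourier_eq f.integrable hFf_int]
end

section
/- Let T be a bounded operator on ℓ²(ℤ²) with rapidly decaying matrix entries and let W := {n ∈ ℤ² : n₂ ≥ 0}. Then the commutator [P_W, T] decays rapidly away from the boundary of W: for every μ ≥ 0 there exists C ≥ 0 such that |([P_W, T])_{ij}| ≤ C (1+‖i−j‖)^{−μ} (1+|i₂|)^{−μ} (1+|j₂|)^{−μ} for all i, j ∈ ℤ². -/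
open scoped InnerProductSpace
open ContinuousLinearMap

/-- The standard orthonormal basis of `ℓ²(ℤ²)`. -/
noncomputable def stdBasis (i : ℤ × ℤ) : lp (fun _ : ℤ × ℤ => ℂ) 2 := lp.single 2 i 1

/-- Matrix entries `T_{ij} = ⟪e_i, T e_j⟫` of a bounded operator on `ℓ²(ℤ²)`. -/
noncomputable def matrixEntry
    (T : lp (fun _ : ℤ × ℤ => ℂ) 2 →L[ℂ] lp (fun _ : ℤ × ℤ => ℂ) 2) (i j : ℤ × ℤ) : ℂ :=
  ⟪stdBasis i, T (stdBasis j)⟫_ℂ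

/-- The Euclidean norm on `ℤ²`. -/
noncomputable def euclNorm (v : ℤ × ℤ) : ℝ := Real.sqrt ((v.1 : ℝ) ^ 2 + (v.2 : ℝ) ^ 2)

/-- A bounded operator on `ℓ²(ℤ²)` has rapidly decaying matrix entries if for every `μ ≥ 0`
there is `C ≥ 0` with `|T_{ij}| ≤ C (1 + ‖i - j‖)^{-μ}` for all `i, j`. -/
def RapidDecay
    (T : lp (fun _ : ℤ × ℤ => ℂ) 2 →L[ℂ] lp (fun _ : ℤ × ℤ => ℂ) 2) : Prop :=
  ∀ μ : ℝ, 0 ≤ μ → ∃ C : ℝ, 0 ≤ C ∧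
    ∀ i j : ℤ × ℤ, ‖matrixEntry T i j‖ ≤ C * (1 + euclNorm (i - j)) ^ (-μ)

/-!
`P_W` is diagonal, so `[P_W, T]_{ij} = (1_W(i) - 1_W(j)) T_{ij}`: the entry vanishes unless `i`
and `j` lie on opposite sides of the line `n₂ = 0`, and then `|i₂|, |j₂| ≤ |i₂ - j₂| ≤ ‖i - j‖`.
Hence the decay `(1 + ‖i - j‖)^{-3μ}` of `T_{ij}` dominates the required bound.
-/

theorem inner_stdBasis_left (i : ℤ × ℤ) (f : lp (fun _ : ℤ × ℤ => ℂ) 2) :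
    ⟪stdBasis i, f⟫_ℂ = f i := by
  simp [stdBasis, lp.inner_single_left]

section MultiplicationOperator

variable {T P : lp (fun _ : ℤ × ℤ => ℂ) 2 →L[ℂ] lp (fun _ : ℤ × ℤ => ℂ) 2} {m : ℤ × ℤ → ℂ}

theorem apply_stdBasis_of_mul (hP : ∀ x i, P x i = m i * x i) (j : ℤ × ℤ) :
    P (stdBasis j) = m j • stdBasis j := by
  ext k
  rcases eq_or_ne k j with rfl | hkj
  · simp [hP, stdBasis]
  · simp [hP, stdBasis, lp.single_apply, hkj]

theorem matrixEntry_comp_sub_comp_of_mul (hP : ∀ x i, P x i = m i * x i) (i j : ℤ × ℤ) :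
    matrixEntry (P ∘L T - T ∘L P) i j = (m i - m j) * matrixEntry T i j := by
  simp only [matrixEntry, sub_apply, comp_apply, inner_sub_right, apply_stdBasis_of_mul hP,
    map_smul, inner_smul_right, inner_stdBasis_left, hP]
  ring

end MultiplicationOperator

theorem abs_le_abs_sub_of_not_nonneg_iff {α : Type*} [AddCommGroup α] [LinearOrder α]
    [IsOrderedAddMonoid α] {a b : α} (h : ¬(0 ≤ a ↔ 0 ≤ b)) : |a| ≤ |a - b| := by
  rcases le_or_gt 0 a with ha | ha
  · have hb : b < 0 := not_le.mp fun hb => h (iff_of_true ha hb)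
    rw [abs_of_nonneg ha, abs_of_nonneg (sub_nonneg.2 (hb.le.trans ha))]
    exact (le_sub_self_iff a).2 hb.le
  · have hb : 0 ≤ b := not_lt.mp fun hb => h (iff_of_false ha.not_ge hb.not_ge)
    rw [abs_of_neg ha, abs_of_neg (sub_neg.2 (ha.trans_le hb)), neg_sub, le_sub_iff_add_le,
      neg_add_cancel]
    exact hb

theorem abs_snd_le_euclNorm (v : ℤ × ℤ) : |(v.2 : ℝ)| ≤ euclNorm v := by
  rw [euclNorm, ← Real.sqrt_sq_eq_abs]
  exact Real.sqrt_le_sqrt (by nlinarith [sq_nonneg (v.1 : ℝ)])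

theorem abs_snd_le_euclNorm_sub_of_not_nonneg_iff {i j : ℤ × ℤ} (h : ¬(0 ≤ i.2 ↔ 0 ≤ j.2)) :
    |(i.2 : ℝ)| ≤ euclNorm (i - j) ∧ |(j.2 : ℝ)| ≤ euclNorm (i - j) := by
  have h' : ¬(0 ≤ (i.2 : ℝ) ↔ 0 ≤ (j.2 : ℝ)) := by exact_mod_cast h
  have hsnd : |(i.2 : ℝ) - j.2| ≤ euclNorm (i - j) := by
    simpa using abs_snd_le_euclNorm (i - j)
  refine ⟨(abs_le_abs_sub_of_not_nonneg_iff h').trans hsnd, ?_⟩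
  rw [abs_sub_comm] at hsnd
  exact (abs_le_abs_sub_of_not_nonneg_iff (h' ∘ Iff.symm)).trans hsnd

theorem one_add_rpow_neg_three_mul_le {a b d μ : ℝ} (hμ : 0 ≤ μ) (ha : 0 ≤ a) (hb : 0 ≤ b)
    (had : a ≤ d) (hbd : b ≤ d) :
    (1 + d) ^ (-(3 * μ)) ≤ (1 + d) ^ (-μ) * (1 + a) ^ (-μ) * (1 + b) ^ (-μ) := by
  have hd : 0 < 1 + d := by linarith
  have hsplit : (1 + d) ^ (-(3 * μ)) = (1 + d) ^ (-μ) * (1 + d) ^ (-μ) * (1 + d) ^ (-μ) := by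
    rw [← Real.rpow_add hd, ← Real.rpow_add hd]
    ring_nf
  rw [hsplit]
  gcongr (1 + d) ^ (-μ) * ?_ * ?_ <;>
    exact Real.rpow_le_rpow_of_nonpos (by linarith) (by linarith) (by linarith)

/-- If `T` is a bounded operator on `ℓ²(ℤ²)` with rapidly decaying matrix
entries and `W = {n : n₂ ≥ 0}`, then the commutator `[P_W, T]` decays rapidly away from the
boundary of `W`: for every `μ ≥ 0` there is `C ≥ 0` with
`|([P_W, T])_{ij}| ≤ C (1+‖i-j‖)^{-μ} (1+|i₂|)^{-μ} (1+|j₂|)^{-μ}` for all `i, j`. -/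
theorem commutator_rapid_decay_away_from_boundary
    (T PW : lp (fun _ : ℤ × ℤ => ℂ) 2 →L[ℂ] lp (fun _ : ℤ × ℤ => ℂ) 2)
    (hTrd : RapidDecay T)
    (hPW : ∀ (x : lp (fun _ : ℤ × ℤ => ℂ) 2) (i : ℤ × ℤ),
      (PW x) i = if 0 ≤ i.2 then x i else 0) :
    ∀ μ : ℝ, 0 ≤ μ → ∃ C : ℝ, 0 ≤ C ∧
      ∀ i j : ℤ × ℤ, ‖matrixEntry (PW ∘L T - T ∘L PW) i j‖
        ≤ C * (1 + euclNorm (i - j)) ^ (-μ) * (1 + |(i.2 : ℝ)|) ^ (-μ)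
          * (1 + |(j.2 : ℝ)|) ^ (-μ) := by
  intro μ hμ
  obtain ⟨C, hC0, hC⟩ := hTrd (3 * μ) (by linarith)
  refine ⟨C, hC0, fun i j => ?_⟩
  have hPW_mul : ∀ x k, PW x k = (if 0 ≤ k.2 then 1 else 0 : ℂ) * x k := fun x k => by
    rw [hPW]; split_ifs <;> simp
  rw [matrixEntry_comp_sub_comp_of_mul hPW_mul, norm_mul]
  by_cases hij : 0 ≤ i.2 ↔ 0 ≤ j.2
  · simp only [hij, sub_self, norm_zero, zero_mul]
    unfold euclNorm
    positivity
  · have hside := abs_snd_le_euclNorm_sub_of_not_nonneg_iff hij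
    have hjump : ‖(if 0 ≤ i.2 then 1 else 0 : ℂ) - if 0 ≤ j.2 then 1 else 0‖ = 1 := by
      split_ifs <;> simp_all
    calc _ = ‖matrixEntry T i j‖ := by rw [hjump, one_mul]
      _ ≤ C * (1 + euclNorm (i - j)) ^ (-(3 * μ)) := hC i j
      _ ≤ _ := by
        rw [mul_assoc, mul_assoc]
        gcongr
        rw [← mul_assoc]
        exact one_add_rpow_neg_three_mul_le hμ (abs_nonneg _) (abs_nonneg _) hside.1 hside.2
end

section
/- Let A and B be bounded operators on ℓ²(ℤ²) such that: for every μ ≥ 0 there exists C ≥ 0 with |A_{ij}| ≤ C(1+‖i−j‖)^{−μ}(1+|i₁|)^{−μ}(1+|j₁|)^{−μ} for all i,j ∈ ℤ², and for every μ ≥ 0 there exists C ≥ 0 with |B_{ij}| ≤ C(1+‖i−j‖)^{−μ}(1+|i₂|)^{−μ}(1+|j₂|)^{−μ} for all i,j ∈ ℤ². Then the matrix entries of the composition A∘B are absolutely summable: the family (i,j) ↦ |(A∘B)_{ij}| over ℤ²×ℤ² is summable. -/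
open scoped InnerProductSpace
open ContinuousLinearMap

/-!
Write `w(k) = (1 + |k₁|)⁻² (1 + |k₂|)⁻²`, which is summable over `ℤ²`. The entry `A_{ik}` lacks
decay in `i₂`, but `1 + |i₂| ≤ (1 + ‖i - k‖)(1 + |k₂|)`, so the distance factor buys it at the
cost of a growing factor `(1 + |k₂|)²`; this is absorbed by the strong `k₂`-decay of `B_{kj}`, and
symmetrically for `j₁`. Hence `|A_{ik}| |B_{kj}| ≤ C w(i) w(j) w(k)`, and summing over `k` gives
`|(AB)_{ij}| ≤ C' w(i) w(j)`, which is summable over `ℤ² × ℤ²`.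
-/

lemma summable_one_add_abs_int_rpow_neg {p : ℝ} (hp : 1 < p) :
    Summable fun n : ℤ => (1 + |(n : ℝ)|) ^ (-p) := by
  refine (Real.summable_abs_int_rpow hp).of_norm_bounded_eventually ?_
  filter_upwards [(Set.finite_singleton (0 : ℤ)).compl_mem_cofinite] with n hn
  rw [Real.norm_of_nonneg (by positivity)]
  exact Real.rpow_le_rpow_of_nonpos (by simpa using hn) (by linarith) (by linarith)

lemma one_add_abs_le_mul_one_add_abs_sub (x y : ℝ) : 1 + |x| ≤ (1 + |x - y|) * (1 + |y|) := by
  nlinarith [abs_sub_abs_le_abs_sub x y, abs_nonneg (x - y), abs_nonneg y]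

lemma rpow_neg_two_mul_mul_le {s D a b q : ℝ} (hs : 0 ≤ s) (hD : 1 ≤ D) (ha : 1 ≤ a)
    (hb : 0 < b) (hq : 0 < q) (hbq : b ≤ D * q) :
    D ^ (-(2 * s)) * a ^ (-(2 * s)) ≤ a ^ (-s) * b ^ (-s) * q ^ s := by
  have hexp : -(2 * s) ≤ -s := by linarith
  calc D ^ (-(2 * s)) * a ^ (-(2 * s))
      ≤ D ^ (-s) * a ^ (-s) := by gcongr
    _ = (D * q) ^ (-s) * q ^ s * a ^ (-s) := by
        rw [Real.mul_rpow (zero_le_one.trans hD) hq.le, Real.rpow_neg hq.le, mul_assoc (D ^ (-s)),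
          inv_mul_cancel₀ (Real.rpow_pos_of_pos hq s).ne', mul_one]
    _ ≤ b ^ (-s) * q ^ s * a ^ (-s) := by
        gcongr ?_ * _ * _
        exact Real.rpow_le_rpow_of_nonpos hb hbq (neg_nonpos.2 hs)
    _ = a ^ (-s) * b ^ (-s) * q ^ s := by ring

lemma euclNorm_nonneg (v : ℤ × ℤ) : 0 ≤ euclNorm v := Real.sqrt_nonneg _

lemma euclNorm_sub_comm (i k : ℤ × ℤ) : euclNorm (i - k) = euclNorm (k - i) := by
  simp only [euclNorm, Prod.fst_sub, Prod.snd_sub, Int.cast_sub]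
  ring_nf

lemma abs_fst_sub_le_euclNorm (i k : ℤ × ℤ) : |(i.1 : ℝ) - k.1| ≤ euclNorm (i - k) := by
  rw [euclNorm, ← Real.sqrt_sq_eq_abs]
  refine Real.sqrt_le_sqrt ?_
  simp only [Prod.fst_sub, Prod.snd_sub, Int.cast_sub]
  nlinarith [sq_nonneg ((i.2 : ℝ) - k.2)]

lemma abs_snd_sub_le_euclNorm (i k : ℤ × ℤ) : |(i.2 : ℝ) - k.2| ≤ euclNorm (i - k) := by
  rw [euclNorm, ← Real.sqrt_sq_eq_abs]
  refine Real.sqrt_le_sqrt ?_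
  simp only [Prod.fst_sub, Prod.snd_sub, Int.cast_sub]
  nlinarith [sq_nonneg ((i.1 : ℝ) - k.1)]

noncomputable def productWeight (s : ℝ) (k : ℤ × ℤ) : ℝ :=
  (1 + |(k.1 : ℝ)|) ^ (-s) * (1 + |(k.2 : ℝ)|) ^ (-s)

lemma productWeight_nonneg (s : ℝ) (k : ℤ × ℤ) : 0 ≤ productWeight s k := by
  unfold productWeight; positivity

lemma summable_productWeight {s : ℝ} (hs : 1 < s) : Summable (productWeight s) :=
  (summable_one_add_abs_int_rpow_neg hs).mul_of_nonneg (summable_one_add_abs_int_rpow_neg hs)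
    (fun _ => by positivity) (fun _ => by positivity)

lemma le_productWeight_mul_of_le_decay_fst {s C x : ℝ} {i k : ℤ × ℤ} (hs : 0 ≤ s) (hC : 0 ≤ C)
    (hx : x ≤ C * (1 + euclNorm (i - k)) ^ (-(2 * s)) * (1 + |(i.1 : ℝ)|) ^ (-(2 * s))
      * (1 + |(k.1 : ℝ)|) ^ (-(2 * s))) :
    x ≤ C * productWeight s i * ((1 + |(k.1 : ℝ)|) ^ (-(2 * s)) * (1 + |(k.2 : ℝ)|) ^ s) := by
  have hi : 1 + |(i.2 : ℝ)| ≤ (1 + euclNorm (i - k)) * (1 + |(k.2 : ℝ)|) :=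
    (one_add_abs_le_mul_one_add_abs_sub _ _).trans <| by
      gcongr; exact abs_snd_sub_le_euclNorm i k
  calc x ≤ C * (1 + |(k.1 : ℝ)|) ^ (-(2 * s))
        * ((1 + euclNorm (i - k)) ^ (-(2 * s)) * (1 + |(i.1 : ℝ)|) ^ (-(2 * s))) :=
        hx.trans_eq (by ring)
    _ ≤ C * (1 + |(k.1 : ℝ)|) ^ (-(2 * s))
        * ((1 + |(i.1 : ℝ)|) ^ (-s) * (1 + |(i.2 : ℝ)|) ^ (-s) * (1 + |(k.2 : ℝ)|) ^ s) := by
        gcongr _ * ?_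
        exact rpow_neg_two_mul_mul_le hs (by linarith [euclNorm_nonneg (i - k)])
          (le_add_of_nonneg_right (abs_nonneg _)) (by positivity) (by positivity) hi
    _ = _ := by unfold productWeight; ring

lemma le_productWeight_mul_of_le_decay_snd {s C x : ℝ} {k j : ℤ × ℤ} (hs : 0 ≤ s) (hC : 0 ≤ C)
    (hx : x ≤ C * (1 + euclNorm (k - j)) ^ (-(2 * s)) * (1 + |(k.2 : ℝ)|) ^ (-(2 * s))
      * (1 + |(j.2 : ℝ)|) ^ (-(2 * s))) :
    x ≤ C * productWeight s j * ((1 + |(k.2 : ℝ)|) ^ (-(2 * s)) * (1 + |(k.1 : ℝ)|) ^ s) := by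
  have hj : 1 + |(j.1 : ℝ)| ≤ (1 + euclNorm (k - j)) * (1 + |(k.1 : ℝ)|) :=
    (one_add_abs_le_mul_one_add_abs_sub _ _).trans <| by
      gcongr; rw [euclNorm_sub_comm]; exact abs_fst_sub_le_euclNorm j k
  calc x ≤ C * (1 + |(k.2 : ℝ)|) ^ (-(2 * s))
        * ((1 + euclNorm (k - j)) ^ (-(2 * s)) * (1 + |(j.2 : ℝ)|) ^ (-(2 * s))) :=
        hx.trans_eq (by ring)
    _ ≤ C * (1 + |(k.2 : ℝ)|) ^ (-(2 * s))
        * ((1 + |(j.2 : ℝ)|) ^ (-s) * (1 + |(j.1 : ℝ)|) ^ (-s) * (1 + |(k.1 : ℝ)|) ^ s) := by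
        gcongr _ * ?_
        exact rpow_neg_two_mul_mul_le hs (by linarith [euclNorm_nonneg (k - j)])
          (le_add_of_nonneg_right (abs_nonneg _)) (by positivity) (by positivity) hj
    _ = _ := by unfold productWeight; ring

lemma hasSum_matrixEntry_comp
    (A B : lp (fun _ : ℤ × ℤ => ℂ) 2 →L[ℂ] lp (fun _ : ℤ × ℤ => ℂ) 2) (i j : ℤ × ℤ) :
    HasSum (fun k => matrixEntry A i k * matrixEntry B k j) (matrixEntry (A ∘L B) i j) := by
  set y := B (stdBasis j)
  have hy : ∀ k, lp.single 2 k (y k) = matrixEntry B k j • stdBasis k := fun k => by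
    rw [matrixEntry, stdBasis, lp.inner_single_left, ← lp.single_smul, smul_eq_mul, mul_one]
    simp [y]
  have hsum : HasSum (fun k => ⟪stdBasis i, A (lp.single 2 k (y k))⟫_ℂ) ⟪stdBasis i, A y⟫_ℂ :=
    (innerSL ℂ (stdBasis i)).hasSum (A.hasSum (lp.hasSum_single (by norm_num) y))
  refine hsum.congr_fun fun k => ?_
  rw [hy, map_smul, inner_smul_right, matrixEntry, mul_comm]

lemma norm_mul_norm_le_productWeight {s Ca Cb : ℝ} (hs : 0 ≤ s) (hCa : 0 ≤ Ca) (hCb : 0 ≤ Cb)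
    {A B : lp (fun _ : ℤ × ℤ => ℂ) 2 →L[ℂ] lp (fun _ : ℤ × ℤ => ℂ) 2}
    (hA : ∀ i j : ℤ × ℤ, ‖matrixEntry A i j‖
      ≤ Ca * (1 + euclNorm (i - j)) ^ (-(2 * s)) * (1 + |(i.1 : ℝ)|) ^ (-(2 * s))
        * (1 + |(j.1 : ℝ)|) ^ (-(2 * s)))
    (hB : ∀ i j : ℤ × ℤ, ‖matrixEntry B i j‖
      ≤ Cb * (1 + euclNorm (i - j)) ^ (-(2 * s)) * (1 + |(i.2 : ℝ)|) ^ (-(2 * s))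
        * (1 + |(j.2 : ℝ)|) ^ (-(2 * s)))
    (i j k : ℤ × ℤ) :
    ‖matrixEntry A i k‖ * ‖matrixEntry B k j‖
      ≤ Ca * Cb * (productWeight s i * productWeight s j) * productWeight s k := by
  have hcancel : ∀ x : ℝ, 0 < x → x ^ (-(2 * s)) * x ^ s = x ^ (-s) := fun x hx => by
    rw [← Real.rpow_add hx]; ring_nf
  set p := 1 + |(k.1 : ℝ)|
  set q := 1 + |(k.2 : ℝ)|
  calc ‖matrixEntry A i k‖ * ‖matrixEntry B k j‖
      ≤ (Ca * productWeight s i * (p ^ (-(2 * s)) * q ^ s))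
        * (Cb * productWeight s j * (q ^ (-(2 * s)) * p ^ s)) :=
        mul_le_mul (le_productWeight_mul_of_le_decay_fst hs hCa (hA i k))
          (le_productWeight_mul_of_le_decay_snd hs hCb (hB k j)) (norm_nonneg _)
          (mul_nonneg (mul_nonneg hCa (productWeight_nonneg s i)) (by positivity))
    _ = Ca * Cb * (productWeight s i * productWeight s j)
        * ((p ^ (-(2 * s)) * p ^ s) * (q ^ (-(2 * s)) * q ^ s)) := by ring
    _ = Ca * Cb * (productWeight s i * productWeight s j) * productWeight s k := by
        rw [hcancel p (by positivity), hcancel q (by positivity)]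
        rfl

lemma norm_matrixEntry_comp_le_productWeight {s Ca Cb : ℝ} (hs : 1 < s) (hCa : 0 ≤ Ca)
    (hCb : 0 ≤ Cb) {A B : lp (fun _ : ℤ × ℤ => ℂ) 2 →L[ℂ] lp (fun _ : ℤ × ℤ => ℂ) 2}
    (hA : ∀ i j : ℤ × ℤ, ‖matrixEntry A i j‖
      ≤ Ca * (1 + euclNorm (i - j)) ^ (-(2 * s)) * (1 + |(i.1 : ℝ)|) ^ (-(2 * s))
        * (1 + |(j.1 : ℝ)|) ^ (-(2 * s)))
    (hB : ∀ i j : ℤ × ℤ, ‖matrixEntry B i j‖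
      ≤ Cb * (1 + euclNorm (i - j)) ^ (-(2 * s)) * (1 + |(i.2 : ℝ)|) ^ (-(2 * s))
        * (1 + |(j.2 : ℝ)|) ^ (-(2 * s)))
    (i j : ℤ × ℤ) :
    ‖matrixEntry (A ∘L B) i j‖
      ≤ Ca * Cb * (productWeight s i * productWeight s j) * ∑' k, productWeight s k :=
  (hasSum_matrixEntry_comp A B i j).norm_le_of_bounded
    ((summable_productWeight hs).hasSum.mul_left _) fun k =>
      (norm_mul _ _).trans_le (norm_mul_norm_le_productWeight (by linarith) hCa hCb hA hB i j k)

/-- If `A` decays rapidly away from the vertical axis (in the sense that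
for every `μ ≥ 0` there is `C ≥ 0` with
`|A_{ij}| ≤ C (1+‖i-j‖)^{-μ} (1+|i₁|)^{-μ} (1+|j₁|)^{-μ}`) and `B` decays rapidly away from
the horizontal axis (with `i₂, j₂` in place of `i₁, j₁`), then the matrix entries of `A∘B`
are absolutely summable. -/
theorem product_of_transversally_decaying_is_trace_class
    (A B : lp (fun _ : ℤ × ℤ => ℂ) 2 →L[ℂ] lp (fun _ : ℤ × ℤ => ℂ) 2)
    (hA : ∀ μ : ℝ, 0 ≤ μ → ∃ C : ℝ, 0 ≤ C ∧
      ∀ i j : ℤ × ℤ, ‖matrixEntry A i j‖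
        ≤ C * (1 + euclNorm (i - j)) ^ (-μ) * (1 + |(i.1 : ℝ)|) ^ (-μ)
          * (1 + |(j.1 : ℝ)|) ^ (-μ))
    (hB : ∀ μ : ℝ, 0 ≤ μ → ∃ C : ℝ, 0 ≤ C ∧
      ∀ i j : ℤ × ℤ, ‖matrixEntry B i j‖
        ≤ C * (1 + euclNorm (i - j)) ^ (-μ) * (1 + |(i.2 : ℝ)|) ^ (-μ)
          * (1 + |(j.2 : ℝ)|) ^ (-μ)) :
    Summable fun p : (ℤ × ℤ) × (ℤ × ℤ) => ‖matrixEntry (A ∘L B) p.1 p.2‖ := by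
  obtain ⟨Ca, hCa, hA⟩ := hA (2 * 2) (by norm_num)
  obtain ⟨Cb, hCb, hB⟩ := hB (2 * 2) (by norm_num)
  have hW := summable_productWeight one_lt_two
  refine Summable.of_nonneg_of_le (fun _ => norm_nonneg _)
    (fun p => norm_matrixEntry_comp_le_productWeight one_lt_two hCa hCb hA hB p.1 p.2) ?_
  exact ((hW.mul_of_nonneg hW (productWeight_nonneg 2) (productWeight_nonneg 2)).mul_left
    (Ca * Cb)).mul_right _
end
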